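/- Let A, B be positive definite operators on a Hilbert space and t ∈ (0,1). If A ♮_t B ≤ I then A^q ♮_t B^q ≤ I for all q with 0 < q ≤ min{t/(1-t), (1-t)/t}. In particular, for t = 1/2, A ♮ B ≤ I implies A^q ♮ B^q ≤ I for all 0 < q ≤ 1. -/

import Mathlib

open scoped NNReal
open scoped ENNReal
set_option synthInstance.maxHeartbeats 1000000
set_option maxHeartbeats 1000000

noncomputable section

variable {H : Type*} [NormedAddCommGroup H] [InnerProductSpace ℂ H] [CompleteSpace H]

/-- The weighted geometric mean `X #_k Y = X^{1/2} (X^{-1/2} Y X^{-1/2})^k X^{1/2}`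
of bounded operators on a Hilbert space (powers via the continuous functional calculus). -/
def owgm (k : ℝ) (X Y : H →L[ℂ] H) : H →L[ℂ] H :=
  X ^ ((1:ℝ)/2) * (X ^ (-(1:ℝ)/2) * Y * X ^ (-(1:ℝ)/2)) ^ k * X ^ ((1:ℝ)/2)

/-- The (k,t)-spectral geometric mean
`F_{k,t}(A,B) = (A⁻¹ #_k B)^t A^{1+2t-4kt} (A⁻¹ #_k B)^t`. -/
def oF (k t : ℝ) (A B : H →L[ℂ] H) : H →L[ℂ] H :=
  (owgm k (Ring.inverse A) B) ^ t * A ^ (1 + 2*t - 4*k*t) * (owgm k (Ring.inverse A) B) ^ t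

/-- The weighted spectral geometric mean `A ♮_t B = (A⁻¹ # B)^t A (A⁻¹ # B)^t`. -/
def snat (t : ℝ) (A B : H →L[ℂ] H) : H →L[ℂ] H :=
  (owgm (1/2) (Ring.inverse A) B) ^ t * A * (owgm (1/2) (Ring.inverse A) B) ^ t

end


set_option linter.unusedSectionVars false
set_option linter.unusedVariables false

noncomputable section AH
namespace AH

variable {H : Type*} [NormedAddCommGroup H] [InnerProductSpace ℂ H] [CompleteSpace H]
  [Nontrivial H]

local notation "𝓐" => H →L[ℂ] H

lemma ns {a : 𝓐} (hu : IsUnit a) : (0:ℝ≥0) ∉ spectrum ℝ≥0 a :=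
  spectrum.zero_notMem ℝ≥0 hu

lemma rpow_isUnit {a : 𝓐} (ha : 0 ≤ a) (hu : IsUnit a) (x : ℝ) : IsUnit (a ^ x) := by
  rcases eq_or_ne x 0 with rfl | hx
  · rw [CFC.rpow_zero a ha]; exact isUnit_one
  · refine ⟨⟨a ^ x, a ^ (-x), ?_, ?_⟩, rfl⟩
    · rw [← CFC.rpow_add hu, add_neg_cancel, CFC.rpow_zero a ha]
    · rw [← CFC.rpow_add hu, neg_add_cancel, CFC.rpow_zero a ha]

lemma rpow_ns {a : 𝓐} (ha : 0 ≤ a) (hu : IsUnit a) (x : ℝ) : (0:ℝ≥0) ∉ spectrum ℝ≥0 (a ^ x) :=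
  ns (rpow_isUnit ha hu x)

lemma rpow_sa {a : 𝓐} (x : ℝ) : IsSelfAdjoint (a ^ x) :=
  IsSelfAdjoint.of_nonneg CFC.rpow_nonneg

lemma rpow_rpow' {a : 𝓐} (ha : 0 ≤ a) (hu : IsUnit a) (x y : ℝ) (hx : x ≠ 0) :
    (a ^ x) ^ y = a ^ (x * y) := CFC.rpow_rpow a x y hx (hu.isStrictlyPositive ha)

/-- rpow_rpow including the case `x = 0`, assuming `y ≠ 0` not needed. -/
lemma rpow_rpow'' {a : 𝓐} (ha : 0 ≤ a) (hu : IsUnit a) (x y : ℝ) :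
    (a ^ x) ^ y = a ^ (x * y) := by
  rcases eq_or_ne x 0 with rfl | hx
  · rw [CFC.rpow_zero a ha, CFC.one_rpow, zero_mul, CFC.rpow_zero a ha]
  · exact rpow_rpow' ha hu x y hx

lemma rpow_mul_rpow {a : 𝓐} (hu : IsUnit a) (x y : ℝ) :
    a ^ x * a ^ y = a ^ (x + y) := (CFC.rpow_add hu).symm

lemma rpow_one' {a : 𝓐} (ha : 0 ≤ a) : a ^ (1:ℝ) = a := CFC.rpow_one a ha

lemma conj_le_conj {x y : 𝓐} (h : x ≤ y) {c : 𝓐} (hc : IsSelfAdjoint c) :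
    c * x * c ≤ c * y * c := hc.conjugate_le_conjugate h

lemma conj_nonneg {x : 𝓐} (h : 0 ≤ x) {c : 𝓐} (hc : IsSelfAdjoint c) :
    0 ≤ c * x * c := hc.conjugate_nonneg h

lemma conj_collapse {c : 𝓐} (hc : 0 ≤ c) (hcu : IsUnit c) (u v : ℝ) (huv : u + v = 0)
    (z : 𝓐) : c ^ u * (c ^ v * z * c ^ v) * c ^ u = z := by
  rw [show c ^ u * (c ^ v * z * c ^ v) * c ^ u
      = (c ^ u * c ^ v) * z * (c ^ v * c ^ u) from by simp only [mul_assoc],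
    rpow_mul_rpow hcu, rpow_mul_rpow hcu, huv, show v + u = 0 from by linarith,
    CFC.rpow_zero c hc, one_mul, mul_one]

/-- Workhorse: conjugating by `c^s` on both sides. -/
lemma conj_rpow_le_iff {c : 𝓐} (hc : 0 ≤ c) (hcu : IsUnit c) (s : ℝ) (x y : 𝓐) :
    c ^ s * x * c ^ s ≤ y ↔ x ≤ c ^ (-s) * y * c ^ (-s) := by
  constructor
  · intro h
    have := conj_le_conj h (rpow_sa (a := c) (-s))
    rwa [conj_collapse hc hcu (-s) s (by ring) x] at this
  · intro h
    have := conj_le_conj h (rpow_sa (a := c) s)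
    rwa [conj_collapse hc hcu s (-s) (by ring) y] at this

lemma conj_rpow_le_one_iff {c : 𝓐} (hc : 0 ≤ c) (hcu : IsUnit c) (t : ℝ) (x : 𝓐) :
    c ^ t * x * c ^ t ≤ 1 ↔ x ≤ c ^ (-(2*t)) := by
  rw [conj_rpow_le_iff hc hcu t x 1, mul_one, rpow_mul_rpow hcu,
    show -t + -t = -(2*t) from by ring]


lemma iSup_nnnorm_diff (s : Set ℂ) :
    (⨆ k ∈ s, (‖k‖₊ : ℝ≥0∞)) = ⨆ k ∈ s \ {0}, (‖k‖₊ : ℝ≥0∞) := by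
  apply le_antisymm
  · refine iSup₂_le fun k hk => ?_
    rcases eq_or_ne k 0 with rfl | hk0
    · simp
    · exact le_iSup₂_of_le k ⟨hk, hk0⟩ le_rfl
  · exact iSup₂_le fun k hk => le_iSup₂_of_le k hk.1 le_rfl

lemma sr_comm (x y : 𝓐) : spectralRadius ℂ (x * y) = spectralRadius ℂ (y * x) := by
  rw [spectralRadius, spectralRadius, iSup_nnnorm_diff (spectrum ℂ (x*y)),
    iSup_nnnorm_diff (spectrum ℂ (y*x)), spectrum.nonzero_mul_comm]

lemma norm_pos_le_mul {p y z : 𝓐} (hp : IsSelfAdjoint p)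
    (hsr : spectralRadius ℂ p = spectralRadius ℂ (y * z)) :
    ‖p‖ ≤ ‖y‖ * ‖z‖ := by
  have h1 : ‖p‖ = (spectralRadius ℂ p).toReal := hp.toReal_spectralRadius_complex_eq_norm.symm
  have h2 : spectralRadius ℂ (y * z) ≤ (‖y * z‖₊ : ℝ≥0∞) := spectrum.spectralRadius_le_nnnorm _
  have h3 : (spectralRadius ℂ p).toReal ≤ ‖y * z‖ := by
    rw [hsr]
    calc (spectralRadius ℂ (y*z)).toReal ≤ ((‖y * z‖₊ : ℝ≥0∞)).toReal :=
          ENNReal.toReal_mono ENNReal.coe_ne_top h2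
      _ = ‖y * z‖ := by simp
  exact h1 ▸ h3.trans (norm_mul_le y z)

/-- Midpoint step of Löwner–Heinz. -/
lemma lh_step {a b : 𝓐} (hau : IsUnit a) (hbu : IsUnit b) {u v : ℝ}
    (h1 : ‖a ^ u * b ^ (-u)‖ ≤ 1) (h2 : ‖a ^ v * b ^ (-v)‖ ≤ 1) :
    ‖a ^ ((u+v)/2) * b ^ (-((u+v)/2))‖ ≤ 1 := by
  set m : ℝ := (u+v)/2 with hm
  set x : 𝓐 := a ^ m * b ^ (-m) with hx
  have hstar : star x = b ^ (-m) * a ^ m := by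
    rw [hx, star_mul, (rpow_sa m).star_eq, (rpow_sa (-m)).star_eq]
  have hq : star x * x = b ^ (-m) * a ^ (2*m) * b ^ (-m) := by
    rw [hstar, hx, show b ^ (-m) * a ^ m * (a ^ m * b ^ (-m))
        = b ^ (-m) * (a ^ m * a ^ m) * b ^ (-m) from by simp only [mul_assoc],
      rpow_mul_rpow hau, show m + m = 2*m from by ring]
  -- spectral radius chain
  have hc1 : spectralRadius ℂ (star x * x)
      = spectralRadius ℂ ((a ^ u * b ^ (-u)) * (b ^ (-v) * a ^ v)) := by
    rw [hq]
    calc spectralRadius ℂ ((b ^ (-m) * a ^ (2*m)) * b ^ (-m))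
        = spectralRadius ℂ (b ^ (-m) * (b ^ (-m) * a ^ (2*m))) := sr_comm _ _
      _ = spectralRadius ℂ (b ^ (-(2*m)) * a ^ (2*m)) := by
          rw [show b ^ (-m) * (b ^ (-m) * a ^ (2*m)) = (b ^ (-m) * b ^ (-m)) * a ^ (2*m)
            from by simp only [mul_assoc], rpow_mul_rpow hbu,
            show -m + -m = -(2*m) from by ring]
      _ = spectralRadius ℂ (a ^ (2*m) * b ^ (-(2*m))) := sr_comm _ _
      _ = spectralRadius ℂ (a ^ v * (a ^ u * (b ^ (-u) * b ^ (-v)))) := by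
          rw [show a ^ v * (a ^ u * (b ^ (-u) * b ^ (-v)))
              = (a ^ v * a ^ u) * (b ^ (-u) * b ^ (-v)) from by simp only [mul_assoc],
            rpow_mul_rpow hau, rpow_mul_rpow hbu,
            show v + u = 2*m from by rw [hm]; ring,
            show -u + -v = -(2*m) from by rw [hm]; ring]
      _ = spectralRadius ℂ ((a ^ u * (b ^ (-u) * b ^ (-v))) * a ^ v) := sr_comm _ _
      _ = spectralRadius ℂ ((a ^ u * b ^ (-u)) * (b ^ (-v) * a ^ v)) := by
          rw [show (a ^ u * (b ^ (-u) * b ^ (-v))) * a ^ v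
              = (a ^ u * b ^ (-u)) * (b ^ (-v) * a ^ v) from by simp only [mul_assoc]]
  have hsa : IsSelfAdjoint (star x * x) := IsSelfAdjoint.star_mul_self x
  have key : ‖star x * x‖ ≤ ‖a ^ u * b ^ (-u)‖ * ‖b ^ (-v) * a ^ v‖ :=
    norm_pos_le_mul hsa hc1
  have hswap : ‖b ^ (-v) * a ^ v‖ ≤ 1 := by
    have : b ^ (-v) * a ^ v = star (a ^ v * b ^ (-v)) := by
      rw [star_mul, (rpow_sa v).star_eq, (rpow_sa (-v)).star_eq]
    rw [this, norm_star]
    exact h2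
  have hxx : ‖x‖ * ‖x‖ ≤ 1 := by
    rw [← CStarRing.norm_star_mul_self]
    calc ‖star x * x‖ ≤ ‖a ^ u * b ^ (-u)‖ * ‖b ^ (-v) * a ^ v‖ := key
      _ ≤ 1 * 1 := by
          apply mul_le_mul h1 hswap (norm_nonneg _) (le_trans (norm_nonneg _) h1)
      _ = 1 := by norm_num
  nlinarith [norm_nonneg x]

/-- `a^w ≤ b^w` iff the norm condition. -/
lemma le_iff_norm {a b : 𝓐} (ha : 0 ≤ a) (hau : IsUnit a) (hb : 0 ≤ b) (hbu : IsUnit b)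
    (w : ℝ) : a ^ w ≤ b ^ w ↔ ‖a ^ (w/2) * b ^ (-(w/2))‖ ≤ 1 := by
  set x : 𝓐 := a ^ (w/2) * b ^ (-(w/2)) with hx
  have hstar : star x = b ^ (-(w/2)) * a ^ (w/2) := by
    rw [hx, star_mul, (rpow_sa (w/2)).star_eq, (rpow_sa (-(w/2))).star_eq]
  have hq : star x * x = b ^ (-(w/2)) * a ^ w * b ^ (-(w/2)) := by
    rw [hstar, hx, show b ^ (-(w/2)) * a ^ (w/2) * (a ^ (w/2) * b ^ (-(w/2)))
        = b ^ (-(w/2)) * (a ^ (w/2) * a ^ (w/2)) * b ^ (-(w/2)) from by simp only [mul_assoc],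
      rpow_mul_rpow hau, show w/2 + w/2 = w from by ring]
  have hiff1 : a ^ w ≤ b ^ w ↔ star x * x ≤ 1 := by
    rw [hq, conj_rpow_le_iff hb hbu (-(w/2)) (a ^ w) 1, mul_one, neg_neg,
      rpow_mul_rpow hbu, show w/2 + w/2 = w from by ring]
  rw [hiff1, ← CStarAlgebra.norm_le_one_iff_of_nonneg _ (star_mul_self_nonneg x),
    CStarRing.norm_star_mul_self]
  constructor
  · intro h; nlinarith [norm_nonneg x]
  · intro h; nlinarith [norm_nonneg x]

lemma norm_S_zero {a b : 𝓐} (ha : 0 ≤ a) (hb : 0 ≤ b) :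
    ‖a ^ ((0:ℝ)/2) * b ^ (-((0:ℝ)/2))‖ ≤ 1 := by
  rw [show ((0:ℝ)/2) = 0 from by norm_num, show (-(0:ℝ)) = 0 from by norm_num,
    CFC.rpow_zero a ha, CFC.rpow_zero b hb, one_mul, norm_one]

lemma lh_dyadic {a b : 𝓐} (ha : 0 ≤ a) (hau : IsUnit a) (hb : 0 ≤ b) (hbu : IsUnit b)
    (hab : a ≤ b) :
    ∀ n k : ℕ, k ≤ 2^n →
      ‖a ^ (((k:ℝ) / 2^n)/2) * b ^ (-(((k:ℝ) / 2^n)/2))‖ ≤ 1 := by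
  have base1 : ‖a ^ ((1:ℝ)/2) * b ^ (-((1:ℝ)/2))‖ ≤ 1 := by
    refine (le_iff_norm ha hau hb hbu 1).mp ?_
    rw [rpow_one' ha, rpow_one' hb]; exact hab
  intro n
  induction n with
  | zero =>
    intro k hk
    interval_cases k
    · simpa using norm_S_zero ha hb
    · simpa using base1
  | succ n ih =>
    intro k hk
    rcases Nat.even_or_odd k with ⟨j, hj⟩ | ⟨j, hj⟩
    · have hj' : j ≤ 2^n := by subst hj; rw [pow_succ] at hk; omega
      have he : ((k:ℝ) / 2^(n+1)) = (j:ℝ) / 2^n := by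
        subst hj; push_cast; rw [pow_succ]; field_simp; ring
      rw [he]
      exact ih j hj'
    · have hj1 : j ≤ 2^n := by subst hj; rw [pow_succ] at hk; omega
      have hj2 : j + 1 ≤ 2^n := by subst hj; rw [pow_succ] at hk; omega
      have he : ((k:ℝ) / 2^(n+1))/2
          = ((((j:ℝ)/2^n)/2) + (((j+1:ℕ):ℝ)/2^n)/2)/2 := by
        subst hj; push_cast; rw [pow_succ]; field_simp; ring
      have := lh_step hau hbu (ih j hj1) (ih (j+1) hj2)
      rwa [← he] at this

lemma spec_bounds {a : 𝓐} (ha : 0 ≤ a) (hau : IsUnit a) :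
    ∃ ε M : ℝ, 0 < ε ∧ ∀ x ∈ spectrum ℝ a, ε ≤ x ∧ x ≤ M := by
  have hcl : IsClosed (spectrum ℝ a) := spectrum.isClosed a
  have h0 : (0:ℝ) ∉ spectrum ℝ a := spectrum.zero_notMem ℝ hau
  obtain ⟨ε, hε, hball⟩ := Metric.isOpen_iff.mp hcl.isOpen_compl 0 h0
  refine ⟨ε, ‖a‖, hε, fun x hx => ⟨?_, ?_⟩⟩
  · by_contra hlt
    push_neg at hlt
    have hx0 : 0 ≤ x := spectrum_nonneg_of_nonneg ha hx
    have hmem : x ∈ Metric.ball (0:ℝ) ε := by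
      simpa [Real.dist_eq, abs_of_nonneg hx0] using hlt
    exact hball hmem hx
  · have h := spectrum.norm_le_norm_of_mem hx
    calc x ≤ |x| := le_abs_self x
      _ ≤ ‖a‖ := by rwa [Real.norm_eq_abs] at h

lemma exp_abs_bound (u : ℝ) : |Real.exp u - 1| ≤ Real.exp |u| - 1 := by
  rcases le_or_gt 0 u with h | h
  · rw [abs_of_nonneg (sub_nonneg.mpr (Real.one_le_exp h)), abs_of_nonneg h]
  · have h1 : Real.exp u < 1 := Real.exp_lt_one_iff.mpr h
    rw [abs_of_nonpos (sub_nonpos.mpr h1.le), abs_of_neg h, Real.exp_neg]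
    nlinarith [Real.exp_pos u, sq_nonneg (1 - Real.exp u), mul_inv_cancel₀ (ne_of_gt (Real.exp_pos u))]

lemma norm_rpow_sub_one {a : 𝓐} (ha : 0 ≤ a) (hau : IsUnit a) :
    ∃ L : ℝ, ∀ δ : ℝ, ‖a ^ δ - 1‖ ≤ Real.exp (|δ| * L) - 1 := by
  obtain ⟨ε, M, hε, hεM⟩ := spec_bounds ha hau
  set L : ℝ := max |Real.log ε| |Real.log M| with hL
  have hL0 : 0 ≤ L := le_trans (abs_nonneg _) (le_max_left _ _)
  have hsa : IsSelfAdjoint a := IsSelfAdjoint.of_nonneg ha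
  refine ⟨L, fun δ => ?_⟩
  have hsubset : spectrum ℝ a ⊆ {(0:ℝ)}ᶜ := fun x hx => by
    have := (hεM x hx).1
    simp only [Set.mem_compl_iff, Set.mem_singleton_iff]
    intro h0
    rw [h0] at this
    linarith
  have hcont : ContinuousOn (fun x : ℝ => Real.exp (δ * Real.log x)) (spectrum ℝ a) :=
    Real.continuous_exp.comp_continuousOn
      (continuousOn_const.mul (Real.continuousOn_log.mono hsubset))
  have hrep : a ^ δ = cfc (fun x : ℝ => Real.exp (δ * Real.log x)) a := by
    rw [CFC.rpow_def, cfc_nnreal_eq_real _ a ha]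
    apply cfc_congr
    intro x hx
    have hx0 : 0 < x := lt_of_lt_of_le hε (hεM x hx).1
    simp only [NNReal.coe_rpow, Real.coe_toNNReal x hx0.le]
    rw [Real.rpow_def_of_pos hx0, mul_comm]
  have hsub : a ^ δ - 1 = cfc (fun x : ℝ => Real.exp (δ * Real.log x) - 1) a := by
    rw [hrep, ← cfc_const_one ℝ a hsa, ← cfc_sub _ _ a hcont continuousOn_const]
  rw [hsub]
  apply norm_cfc_le (by nlinarith [Real.one_le_exp (mul_nonneg (abs_nonneg δ) hL0)])
  intro x hx
  obtain ⟨h1, h2⟩ := hεM x hx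
  have hx0 : 0 < x := lt_of_lt_of_le hε h1
  have hlog : |Real.log x| ≤ L := by
    have l1 : Real.log ε ≤ Real.log x := Real.log_le_log hε h1
    have l2 : Real.log x ≤ Real.log M := Real.log_le_log hx0 h2
    exact abs_le_max_abs_abs l1 l2
  calc ‖Real.exp (δ * Real.log x) - 1‖
      = |Real.exp (δ * Real.log x) - 1| := Real.norm_eq_abs _
    _ ≤ Real.exp |δ * Real.log x| - 1 := exp_abs_bound _
    _ ≤ Real.exp (|δ| * L) - 1 := by
        have hb2 : |δ * Real.log x| ≤ |δ| * L := by
          rw [abs_mul]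
          exact mul_le_mul_of_nonneg_left hlog (abs_nonneg δ)
        exact sub_le_sub_right (Real.exp_le_exp.mpr hb2) 1

open Filter in
lemma rpow_tendsto {a : 𝓐} (ha : 0 ≤ a) (hau : IsUnit a) {r : ℝ} {u : ℕ → ℝ}
    (h : Tendsto u atTop (nhds r)) :
    Tendsto (fun n => a ^ (u n)) atTop (nhds (a ^ r)) := by
  obtain ⟨L, hL⟩ := norm_rpow_sub_one ha hau
  have key : ∀ n, ‖a ^ u n - a ^ r‖ ≤ ‖a ^ r‖ * (Real.exp (|u n - r| * L) - 1) := by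
    intro n
    have heq : a ^ u n - a ^ r = a ^ r * (a ^ (u n - r) - 1) := by
      rw [mul_sub, mul_one, rpow_mul_rpow hau, show r + (u n - r) = u n from by ring]
    rw [heq]
    exact (norm_mul_le _ _).trans (mul_le_mul_of_nonneg_left (hL _) (norm_nonneg _))
  have h0 : Tendsto (fun n => u n - r) atTop (nhds 0) := by
    simpa using h.sub (tendsto_const_nhds (x := r))
  have habs : Tendsto (fun n => |u n - r| * L) atTop (nhds 0) := by
    simpa using ((continuous_abs.tendsto 0).comp h0).mul_const L
  have hrhs : Tendsto (fun n => ‖a ^ r‖ * (Real.exp (|u n - r| * L) - 1)) atTop (nhds 0) := by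
    have := ((Real.continuous_exp.tendsto 0).comp habs).sub_const 1
    simpa using (this.const_mul ‖a ^ r‖)
  rw [tendsto_iff_norm_sub_tendsto_zero]
  exact squeeze_zero (fun n => norm_nonneg _) key hrhs

open Filter in
/-- Löwner–Heinz. -/
lemma lh {a b : 𝓐} (ha : 0 ≤ a) (hau : IsUnit a) (hb : 0 ≤ b) (hbu : IsUnit b)
    (hab : a ≤ b) {w : ℝ} (hw0 : 0 ≤ w) (hw1 : w ≤ 1) : a ^ w ≤ b ^ w := by
  set u : ℕ → ℝ := fun n => ((⌊w * 2^n⌋₊ : ℕ) : ℝ) / 2^n with hu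
  have hun : ∀ n, a ^ u n ≤ b ^ u n := by
    intro n
    have hk : ⌊w * 2^n⌋₊ ≤ 2^n := by
      have : w * 2^n ≤ (2^n : ℕ) := by
        push_cast
        nlinarith [pow_pos (show (0:ℝ) < 2 from by norm_num) n]
      calc ⌊w * 2^n⌋₊ ≤ ⌊((2^n : ℕ) : ℝ)⌋₊ := Nat.floor_le_floor this
        _ = 2^n := Nat.floor_natCast _
    exact (le_iff_norm ha hau hb hbu _).mpr (lh_dyadic ha hau hb hbu hab n _ hk)
  have hconv : Tendsto u atTop (nhds w) := by
    have hle : ∀ n, u n ≤ w := by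
      intro n
      rw [hu]
      have h2 : (0:ℝ) < 2^n := pow_pos (by norm_num) n
      rw [div_le_iff₀ h2]
      exact Nat.floor_le (by positivity)
    have hge : ∀ n, w - (1/2)^n ≤ u n := by
      intro n
      rw [hu]
      have h2 : (0:ℝ) < 2^n := pow_pos (by norm_num) n
      have := Nat.sub_one_lt_floor (w * 2^n)
      rw [sub_le_iff_le_add, div_add' _ _ _ (ne_of_gt h2), le_div_iff₀ h2]
      have hpow : ((1:ℝ)/2)^n * 2^n = 1 := by
        rw [div_pow, one_pow, div_mul_cancel₀]
        exact ne_of_gt h2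
      nlinarith [this]
    have hlow : Tendsto (fun n => w - (1/2:ℝ)^n) atTop (nhds w) := by
      have : Tendsto (fun n => ((1:ℝ)/2)^n) atTop (nhds 0) :=
        tendsto_pow_atTop_nhds_zero_of_lt_one (by norm_num) (by norm_num)
      simpa using (tendsto_const_nhds (x := w)).sub this
    exact tendsto_of_tendsto_of_tendsto_of_le_of_le hlow tendsto_const_nhds hge hle
  have hcv := (rpow_tendsto hb hbu hconv).sub (rpow_tendsto ha hau hconv)
  have hmem : b ^ w - a ^ w ∈ {x : 𝓐 | 0 ≤ x} := by
    apply (CStarAlgebra.isClosed_nonneg (A := 𝓐)).mem_of_tendsto hcv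
    exact Filter.Eventually.of_forall fun n => sub_nonneg.mpr (hun n)
  exact sub_nonneg.mp hmem

/-- The geometric mean `A⁻¹ # B` in canonical form. -/
def gmr (A B : 𝓐) : 𝓐 :=
  A ^ (-(1/2) : ℝ) * (A ^ ((1/2) : ℝ) * B * A ^ ((1/2) : ℝ)) ^ ((1/2) : ℝ) * A ^ (-(1/2) : ℝ)

lemma inn_nonneg {A B : 𝓐} (hB : 0 ≤ B) :
    0 ≤ A ^ ((1/2) : ℝ) * B * A ^ ((1/2) : ℝ) := conj_nonneg hB (rpow_sa _)

lemma inn_isUnit {A B : 𝓐} (hA : 0 ≤ A) (hAu : IsUnit A) (hBu : IsUnit B) :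
    IsUnit (A ^ ((1/2) : ℝ) * B * A ^ ((1/2) : ℝ)) :=
  ((rpow_isUnit hA hAu _).mul hBu).mul (rpow_isUnit hA hAu _)

lemma gmr_nonneg {A B : 𝓐} (hB : 0 ≤ B) : 0 ≤ gmr A B :=
  conj_nonneg (CFC.rpow_nonneg (a := A ^ ((1/2) : ℝ) * B * A ^ ((1/2) : ℝ))) (rpow_sa _)

lemma gmr_isUnit {A B : 𝓐} (hA : 0 ≤ A) (hAu : IsUnit A) (hB : 0 ≤ B) (hBu : IsUnit B) :
    IsUnit (gmr A B) :=
  ((rpow_isUnit hA hAu _).mul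
    (rpow_isUnit (inn_nonneg hB) (inn_isUnit hA hAu hBu) _)).mul (rpow_isUnit hA hAu _)

lemma half_half {A : 𝓐} (hA : 0 ≤ A) (hAu : IsUnit A) :
    A ^ ((1/2) : ℝ) * A ^ ((1/2) : ℝ) = A := by
  rw [rpow_mul_rpow hAu, show ((1/2) + (1/2) : ℝ) = 1 from by norm_num, rpow_one' hA]

lemma gmr_conj {A B : 𝓐} (hA : 0 ≤ A) (hAu : IsUnit A) (hB : 0 ≤ B) (hBu : IsUnit B) :
    gmr A B * A * gmr A B = B := by
  unfold gmr
  have hM : 0 ≤ A ^ ((1/2) : ℝ) * B * A ^ ((1/2) : ℝ) := inn_nonneg hB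
  have hMu := inn_isUnit hA hAu hBu (B := B)
  set P : 𝓐 := A ^ (-(1/2) : ℝ) with hP
  set M : 𝓐 := A ^ ((1/2) : ℝ) * B * A ^ ((1/2) : ℝ) with hMdef
  set N : 𝓐 := M ^ ((1/2) : ℝ) with hN
  have mid : P * A * P = 1 := by
    rw [hP, show A ^ (-(1/2) : ℝ) * A * A ^ (-(1/2) : ℝ)
        = A ^ (-(1/2) : ℝ) * (A ^ ((1/2) : ℝ) * A ^ ((1/2) : ℝ)) * A ^ (-(1/2) : ℝ)
      from by rw [half_half hA hAu], show A ^ (-(1/2) : ℝ) * (A ^ ((1/2) : ℝ) * A ^ ((1/2) : ℝ))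
        * A ^ (-(1/2) : ℝ) = (A ^ (-(1/2) : ℝ) * A ^ ((1/2) : ℝ)) * (A ^ ((1/2) : ℝ)
        * A ^ (-(1/2) : ℝ)) from by simp only [mul_assoc], rpow_mul_rpow hAu,
      rpow_mul_rpow hAu, show (-(1/2) + (1/2) : ℝ) = 0 from by norm_num,
      show ((1/2) + -(1/2) : ℝ) = 0 from by norm_num, CFC.rpow_zero A hA, one_mul]
  have hNN : N * N = M := half_half hM hMu
  calc (P * N * P) * A * (P * N * P)
      = (P * N) * (P * A * P) * (N * P) := by simp only [mul_assoc]
    _ = (P * N) * 1 * (N * P) := by rw [mid]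
    _ = P * (N * N) * P := by simp only [mul_one, mul_assoc]
    _ = P * M * P := by rw [hNN]
    _ = (P * A ^ ((1/2) : ℝ)) * B * (A ^ ((1/2) : ℝ) * P) := by
        rw [hMdef]; simp only [mul_assoc]
    _ = A ^ ((0:ℝ)) * B * A ^ ((0:ℝ)) := by
        rw [hP, rpow_mul_rpow hAu, rpow_mul_rpow hAu,
          show (-(1/2) + (1/2) : ℝ) = 0 from by norm_num,
          show ((1/2) + -(1/2) : ℝ) = 0 from by norm_num]
    _ = B := by rw [CFC.rpow_zero A hA, one_mul, mul_one]

lemma ring_inverse_eq_rpow {A : 𝓐} (hA : 0 ≤ A) (hAu : IsUnit A) :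
    Ring.inverse A = A ^ (-1 : ℝ) := by
  calc Ring.inverse A = Ring.inverse (hAu.unit : 𝓐) := by rw [hAu.unit_spec]
    _ = ((hAu.unit⁻¹ : (𝓐)ˣ) : 𝓐) := Ring.inverse_unit _
    _ = (hAu.unit : 𝓐) ^ (-1 : ℝ) :=
        (CFC.rpow_neg_one_eq_inv hAu.unit (by rw [hAu.unit_spec]; exact hA)).symm
    _ = A ^ (-1 : ℝ) := by rw [hAu.unit_spec]

lemma owgm_eq_gmr {A : 𝓐} (hA : 0 ≤ A) (hAu : IsUnit A) (B' : 𝓐) :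
    owgm (1/2) (Ring.inverse A) B' = gmr A B' := by
  unfold owgm gmr
  rw [ring_inverse_eq_rpow hA hAu,
    rpow_rpow' hA hAu (-1) ((1:ℝ)/2) (by norm_num),
    rpow_rpow' hA hAu (-1) (-(1:ℝ)/2) (by norm_num),
    show ((-1) * ((1:ℝ)/2) : ℝ) = -(1/2) from by norm_num,
    show ((-1) * (-(1:ℝ)/2) : ℝ) = (1/2) from by norm_num]

lemma snat_eq {A : 𝓐} (hA : 0 ≤ A) (hAu : IsUnit A) (t : ℝ) (B' : 𝓐) :
    snat t A B' = (gmr A B') ^ t * A * (gmr A B') ^ t := by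
  unfold snat
  rw [owgm_eq_gmr hA hAu B']

lemma pos_sol_unique {B X Y : 𝓐} (hB : 0 ≤ B) (hBu : IsUnit B) (hX : 0 ≤ X) (hY : 0 ≤ Y)
    (hXY : X * B * X = Y * B * Y) : X = Y := by
  have hSS := half_half hB hBu
  have key : ∀ Z : 𝓐, (B ^ ((1/2):ℝ) * Z * B ^ ((1/2):ℝ)) * (B ^ ((1/2):ℝ) * Z * B ^ ((1/2):ℝ))
      = B ^ ((1/2):ℝ) * (Z * B * Z) * B ^ ((1/2):ℝ) := by
    intro Z
    rw [show (B ^ ((1/2):ℝ) * Z * B ^ ((1/2):ℝ)) * (B ^ ((1/2):ℝ) * Z * B ^ ((1/2):ℝ))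
        = B ^ ((1/2):ℝ) * (Z * (B ^ ((1/2):ℝ) * B ^ ((1/2):ℝ)) * Z) * B ^ ((1/2):ℝ)
      from by simp only [mul_assoc], hSS]
  have hmain : B ^ ((1/2):ℝ) * X * B ^ ((1/2):ℝ) = B ^ ((1/2):ℝ) * Y * B ^ ((1/2):ℝ) := by
    calc B ^ ((1/2):ℝ) * X * B ^ ((1/2):ℝ)
        = CFC.sqrt (B ^ ((1/2):ℝ) * (X * B * X) * B ^ ((1/2):ℝ)) :=
          (CFC.sqrt_unique (key X) (conj_nonneg hX (rpow_sa _))).symm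
      _ = CFC.sqrt (B ^ ((1/2):ℝ) * (Y * B * Y) * B ^ ((1/2):ℝ)) := by rw [hXY]
      _ = B ^ ((1/2):ℝ) * Y * B ^ ((1/2):ℝ) :=
          CFC.sqrt_unique (key Y) (conj_nonneg hY (rpow_sa _))
  calc X = B ^ (-(1/2):ℝ) * (B ^ ((1/2):ℝ) * X * B ^ ((1/2):ℝ)) * B ^ (-(1/2):ℝ) :=
        (conj_collapse hB hBu (-(1/2)) (1/2) (by norm_num) X).symm
    _ = B ^ (-(1/2):ℝ) * (B ^ ((1/2):ℝ) * Y * B ^ ((1/2):ℝ)) * B ^ (-(1/2):ℝ) := by rw [hmain]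
    _ = Y := conj_collapse hB hBu (-(1/2)) (1/2) (by norm_num) Y

lemma gmr_swap {A B : 𝓐} (hA : 0 ≤ A) (hAu : IsUnit A) (hB : 0 ≤ B) (hBu : IsUnit B) :
    gmr B A = (gmr A B) ^ (-1 : ℝ) := by
  have hC : 0 ≤ gmr A B := gmr_nonneg hB
  have hCu : IsUnit (gmr A B) := gmr_isUnit hA hAu hB hBu
  have hc := gmr_conj hA hAu hB hBu
  apply pos_sol_unique hB hBu (gmr_nonneg hA) (CFC.rpow_nonneg)
  rw [gmr_conj hB hBu hA hAu]
  calc A = (gmr A B) ^ (-1:ℝ) * ((gmr A B) ^ (1:ℝ) * A * (gmr A B) ^ (1:ℝ))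
        * (gmr A B) ^ (-1:ℝ) := (conj_collapse hC hCu (-1) 1 (by norm_num) A).symm
    _ = (gmr A B) ^ (-1:ℝ) * B * (gmr A B) ^ (-1:ℝ) := by
        simp only [rpow_one' hC]
        rw [hc]

lemma main_chain {A B : 𝓐} (hA : 0 ≤ A) (hAu : IsUnit A) (hB : 0 ≤ B) (hBu : IsUnit B)
    {t q : ℝ} (ht0 : 0 < t) (ht2 : t ≤ 1/2) (hq0 : 0 < q) (hq : q ≤ t/(1-t))
    (hyp : A ≤ (gmr A B) ^ (-(2*t) : ℝ)) :
    A ^ q ≤ (gmr (A ^ q) (B ^ q)) ^ (-(2*t) : ℝ) := by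
  have h1t : 0 < 1 - t := by linarith
  have hq1 : q ≤ 1 := hq.trans ((div_le_one h1t).mpr (by linarith))
  have hC : 0 ≤ gmr A B := gmr_nonneg hB
  have hCu : IsUnit (gmr A B) := gmr_isUnit hA hAu hB hBu
  set e : ℝ := q * (1-t) / t with he
  have he0 : 0 < e := by positivity
  have he1 : e ≤ 1 := by
    have h' := mul_le_mul_of_nonneg_right hq h1t.le
    rw [div_mul_cancel₀ _ (ne_of_gt h1t)] at h'
    rw [he, div_le_one ht0]
    linarith
  -- B ≤ C^{2-2t}
  have hBle : B ≤ (gmr A B) ^ ((2 - 2*t) : ℝ) := by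
    have h1 := conj_le_conj hyp (IsSelfAdjoint.of_nonneg hC)
    rw [gmr_conj hA hAu hB hBu] at h1
    have h2 : gmr A B * (gmr A B) ^ (-(2*t):ℝ) * gmr A B = (gmr A B) ^ ((2-2*t):ℝ) := by
      calc gmr A B * (gmr A B) ^ (-(2*t):ℝ) * gmr A B
          = (gmr A B) ^ (1:ℝ) * (gmr A B) ^ (-(2*t):ℝ) * (gmr A B) ^ (1:ℝ) := by
            rw [rpow_one' hC]
        _ = (gmr A B) ^ ((2-2*t):ℝ) := by
            rw [rpow_mul_rpow hCu, rpow_mul_rpow hCu,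
              show ((1 + -(2*t)) + 1 : ℝ) = 2 - 2*t from by ring]
    rwa [h2] at h1
  -- B^q ≤ C^{(2-2t)q}
  have hBq : B ^ q ≤ (gmr A B) ^ ((2-2*t)*q : ℝ) := by
    have := lh hB hBu (CFC.rpow_nonneg) (rpow_isUnit hC hCu _) hBle hq0.le hq1
    rwa [rpow_rpow' hC hCu _ q (by linarith)] at this
  -- A^e ≤ C^{-2t e} and inversion
  have hAe : A ^ e ≤ (gmr A B) ^ ((-(2*t))*e : ℝ) := by
    have := lh hA hAu (CFC.rpow_nonneg) (rpow_isUnit hC hCu _) hyp he0.le he1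
    rwa [rpow_rpow' hC hCu _ e (by intro hcon; nlinarith)] at this
  have hKey : (gmr A B) ^ ((2-2*t)*q : ℝ) ≤ (A ^ q) ^ (-((1-t)/t) : ℝ) := by
    have hinv := CStarAlgebra.rpow_neg_one_le_rpow_neg_one hAe
      ((rpow_isUnit hA hAu e).isStrictlyPositive CFC.rpow_nonneg)
    rw [rpow_rpow' hA hAu e (-1) (ne_of_gt he0),
      rpow_rpow' hC hCu _ (-1) (by intro hcon; nlinarith)] at hinv
    have e1 : ((-(2*t))*e) * (-1) = (2-2*t)*q := by rw [he]; field_simp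
    have e2 : e * (-1:ℝ) = q * (-((1-t)/t)) := by rw [he]; field_simp; try ring
    rw [e1, e2, ← rpow_rpow' hA hAu q _ (ne_of_gt hq0)] at hinv
    exact hinv
  -- assemble
  have hXa : 0 ≤ A ^ q := CFC.rpow_nonneg
  have hXu : IsUnit (A ^ q) := rpow_isUnit hA hAu q
  have hYa : 0 ≤ B ^ q := CFC.rpow_nonneg
  have hYu : IsUnit (B ^ q) := rpow_isUnit hB hBu q
  set γ : ℝ := 1 - (1-t)/t with hγ
  -- inner estimate
  have hinner : (A^q) ^ ((1/2):ℝ) * (B^q) * (A^q) ^ ((1/2):ℝ)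
      ≤ (A^q) ^ (γ : ℝ) := by
    calc (A^q) ^ ((1/2):ℝ) * (B^q) * (A^q) ^ ((1/2):ℝ)
        ≤ (A^q) ^ ((1/2):ℝ) * ((gmr A B) ^ ((2-2*t)*q : ℝ)) * (A^q) ^ ((1/2):ℝ) := by
          exact conj_le_conj hBq (rpow_sa _)
      _ ≤ (A^q) ^ ((1/2):ℝ) * ((A ^ q) ^ (-((1-t)/t) : ℝ)) * (A^q) ^ ((1/2):ℝ) :=
          conj_le_conj hKey (rpow_sa _)
      _ = (A^q) ^ (γ : ℝ) := by
          rw [rpow_mul_rpow hXu, rpow_mul_rpow hXu,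
            show ((1/2 + -((1-t)/t)) + 1/2 : ℝ) = γ from by rw [hγ]; ring]
  -- D ≤ (A^q)^{γ/2 - 1}
  have hD : 0 ≤ gmr (A^q) (B^q) := gmr_nonneg hYa
  have hDu : IsUnit (gmr (A^q) (B^q)) := gmr_isUnit hXa hXu hYa hYu
  have hDle : gmr (A^q) (B^q) ≤ (A^q) ^ (γ/2 - 1 : ℝ) := by
    have hsq := lh (inn_nonneg hYa) (inn_isUnit hXa hXu hYu) (CFC.rpow_nonneg)
      (rpow_isUnit hXa hXu γ) hinner (by norm_num : (0:ℝ) ≤ 1/2) (by norm_num)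
    rw [rpow_rpow'' hXa hXu γ (1/2)] at hsq
    have := conj_le_conj hsq (rpow_sa (a := A^q) (-(1/2)))
    calc gmr (A^q) (B^q)
        = (A^q) ^ (-(1/2):ℝ) * ((A^q) ^ ((1/2):ℝ) * (B^q) * (A^q) ^ ((1/2):ℝ)) ^ ((1/2):ℝ)
          * (A^q) ^ (-(1/2):ℝ) := rfl
      _ ≤ (A^q) ^ (-(1/2):ℝ) * (A^q) ^ (γ * (1/2) : ℝ) * (A^q) ^ (-(1/2):ℝ) := this
      _ = (A^q) ^ (γ/2 - 1 : ℝ) := by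
          rw [rpow_mul_rpow hXu, rpow_mul_rpow hXu,
            show ((-(1/2) + γ * (1/2)) + -(1/2) : ℝ) = γ/2 - 1 from by ring]
  -- D^{2t} ≤ (A^q)^{-1}
  have hD2t : (gmr (A^q) (B^q)) ^ (2*t : ℝ) ≤ (A^q) ^ (-1 : ℝ) := by
    have := lh hD hDu (CFC.rpow_nonneg) (rpow_isUnit hXa hXu _) hDle
      (by linarith : (0:ℝ) ≤ 2*t) (by linarith : (2*t:ℝ) ≤ 1)
    rwa [rpow_rpow' hXa hXu _ (2*t) ?hne,
      show ((γ/2 - 1) * (2*t) : ℝ) = -1 from by rw [hγ]; field_simp; ring] at this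
    case hne =>
      have heq : (γ/2 - 1 : ℝ) = -(1/(2*t)) := by rw [hγ]; field_simp; ring
      rw [heq]
      intro hcon
      have h2t : (0:ℝ) < 1/(2*t) := by positivity
      have := neg_eq_zero.mp hcon
      linarith
  -- invert
  have hfin := CStarAlgebra.rpow_neg_one_le_rpow_neg_one hD2t
    ((rpow_isUnit hD hDu _).isStrictlyPositive CFC.rpow_nonneg)
  rw [rpow_rpow' hXa hXu (-1) (-1) (by norm_num),
    show ((-1:ℝ) * -1) = 1 from by norm_num, rpow_one' hXa,
    rpow_rpow' hD hDu (2*t) (-1) (by positivity),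
    show ((2*t : ℝ) * -1) = -(2*t) from by ring] at hfin
  exact hfin

end AH

/-- Ando–Hiai type inequality for the weighted spectral geometric mean `♮_t`:
if `A ♮_t B ≤ I`, then `A^q ♮_t B^q ≤ I` for `0 < q ≤ min{t/(1-t), (1-t)/t}`. -/
theorem stmt10 {H : Type*} [NormedAddCommGroup H] [InnerProductSpace ℂ H] [CompleteSpace H]
    (A B : H →L[ℂ] H) (hA : 0 ≤ A) (hAu : IsUnit A) (hB : 0 ≤ B) (hBu : IsUnit B)
    (t : ℝ) (ht : t ∈ Set.Ioo (0:ℝ) 1)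
    (h : snat t A B ≤ 1)
    (q : ℝ) (hq : 0 < q) (hq2 : q ≤ min (t/(1-t)) ((1-t)/t)) :
    snat t (A ^ q) (B ^ q) ≤ 1 := by
  rcases subsingleton_or_nontrivial H with hs | hnt
  · exact le_of_eq (Subsingleton.elim _ _)
  obtain ⟨ht0, ht1⟩ := ht
  have h1t : 0 < 1 - t := by linarith
  have hC : 0 ≤ AH.gmr A B := AH.gmr_nonneg hB
  have hCu : IsUnit (AH.gmr A B) := AH.gmr_isUnit hA hAu hB hBu
  have hXa : 0 ≤ A ^ q := CFC.rpow_nonneg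
  have hXu : IsUnit (A ^ q) := AH.rpow_isUnit hA hAu q
  have hYa : 0 ≤ B ^ q := CFC.rpow_nonneg
  have hYu : IsUnit (B ^ q) := AH.rpow_isUnit hB hBu q
  have hD : 0 ≤ AH.gmr (A^q) (B^q) := AH.gmr_nonneg hYa
  have hDu : IsUnit (AH.gmr (A^q) (B^q)) := AH.gmr_isUnit hXa hXu hYa hYu
  rw [AH.snat_eq hA hAu t B, AH.conj_rpow_le_one_iff hC hCu t A] at h
  rw [AH.snat_eq hXa hXu t (B^q), AH.conj_rpow_le_one_iff hD hDu t (A^q)]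
  rcases le_or_gt t (1/2) with hhalf | hhalf
  · exact AH.main_chain hA hAu hB hBu ht0 hhalf hq (hq2.trans (min_le_left _ _)) h
  · have ht2' : 1 - t ≤ 1/2 := by linarith
    have ht0' : 0 < 1 - t := h1t
    have hq' : q ≤ (1-t)/(1-(1-t)) := by
      rw [show (1 - (1-t) : ℝ) = t from by ring]
      exact hq2.trans (min_le_right _ _)
    have hswap : AH.gmr B A = (AH.gmr A B) ^ (-1 : ℝ) := AH.gmr_swap hA hAu hB hBu
    have hyp' : B ≤ (AH.gmr B A) ^ (-(2*(1-t)) : ℝ) := by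
      have h1 := AH.conj_le_conj h (IsSelfAdjoint.of_nonneg hC)
      rw [AH.gmr_conj hA hAu hB hBu] at h1
      have h2 : AH.gmr A B * (AH.gmr A B) ^ (-(2*t):ℝ) * AH.gmr A B
          = (AH.gmr A B) ^ ((2-2*t):ℝ) := by
        calc AH.gmr A B * (AH.gmr A B) ^ (-(2*t):ℝ) * AH.gmr A B
            = (AH.gmr A B) ^ (1:ℝ) * (AH.gmr A B) ^ (-(2*t):ℝ) * (AH.gmr A B) ^ (1:ℝ) := by
              rw [AH.rpow_one' hC]
          _ = (AH.gmr A B) ^ ((2-2*t):ℝ) := by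
              rw [AH.rpow_mul_rpow hCu, AH.rpow_mul_rpow hCu,
                show ((1 + -(2*t)) + 1 : ℝ) = 2 - 2*t from by ring]
      rw [h2] at h1
      rw [hswap, AH.rpow_rpow' hC hCu (-1) _ (by norm_num),
        show ((-1:ℝ) * (-(2*(1-t)))) = 2-2*t from by ring]
      exact h1
    have hmain := AH.main_chain hB hBu hA hAu ht0' ht2' hq hq' hyp'
    have hswapq : AH.gmr (B^q) (A^q) = (AH.gmr (A^q) (B^q)) ^ (-1 : ℝ) :=
      AH.gmr_swap hXa hXu hYa hYu
    rw [hswapq, AH.rpow_rpow' hD hDu (-1) _ (by norm_num),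
      show ((-1:ℝ) * (-(2*(1-t)))) = 2-2*t from by ring] at hmain
    have hDc : (AH.gmr (A^q) (B^q)) ^ (1:ℝ) * (A^q) * (AH.gmr (A^q) (B^q)) ^ (1:ℝ) = B ^ q := by
      rw [AH.rpow_one' hD]
      exact AH.gmr_conj hXa hXu hYa hYu
    calc A ^ q
        = (AH.gmr (A^q) (B^q)) ^ (-1:ℝ) * ((AH.gmr (A^q) (B^q)) ^ (1:ℝ) * (A^q)
          * (AH.gmr (A^q) (B^q)) ^ (1:ℝ)) * (AH.gmr (A^q) (B^q)) ^ (-1:ℝ) :=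
          (AH.conj_collapse hD hDu (-1) 1 (by norm_num) _).symm
      _ = (AH.gmr (A^q) (B^q)) ^ (-1:ℝ) * (B^q) * (AH.gmr (A^q) (B^q)) ^ (-1:ℝ) := by
          rw [hDc]
      _ ≤ (AH.gmr (A^q) (B^q)) ^ (-1:ℝ) * ((AH.gmr (A^q) (B^q)) ^ ((2-2*t):ℝ))
          * (AH.gmr (A^q) (B^q)) ^ (-1:ℝ) := AH.conj_le_conj hmain (AH.rpow_sa _)
      _ = (AH.gmr (A^q) (B^q)) ^ (-(2*t):ℝ) := by
          rw [AH.rpow_mul_rpow hDu, AH.rpow_mul_rpow hDu,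
            show ((-1 + (2-2*t)) + -1 : ℝ) = -(2*t) from by ring]
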